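/- arXiv:cs/0601048 — 7 statements merged into one kernel-verified Lean document; each statement's English description precedes it below -/
import Mathlib

section
/- For every positive integer m and N = 8m, the polynomial f(x) = x + 2m·x² mod N is a permutation of ℤ_N. -/
/-!
If `2 * a ^ 2 = 0` and `a ^ 3 = 0` in a commutative ring, then `x ↦ x + a * x ^ 2` and
`x ↦ x - a * x ^ 2` are mutually inverse: composing them leaves `x` plus multiples of
`2 * a ^ 2` and `a ^ 3`. In `ZMod (8 * m)` the element `a = 2 * m` qualifies, since
`2 * a ^ 2 = 8 * m ^ 2` and `a ^ 3 = 8 * m ^ 3`.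
-/

section QuadraticPermutation

variable {R : Type*} [CommRing R] {a : R}

theorem leftInverse_sub_mul_sq_add_mul_sq (h2 : 2 * a ^ 2 = 0) (h3 : a ^ 3 = 0) :
    Function.LeftInverse (fun x : R => x - a * x ^ 2) (fun x => x + a * x ^ 2) := fun x => by
  linear_combination (-x ^ 3) * h2 - x ^ 4 * h3

theorem rightInverse_sub_mul_sq_add_mul_sq (h2 : 2 * a ^ 2 = 0) (h3 : a ^ 3 = 0) :
    Function.RightInverse (fun x : R => x - a * x ^ 2) (fun x => x + a * x ^ 2) := fun x => by
  linear_combination (-x ^ 3) * h2 + x ^ 4 * h3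

theorem bijective_add_mul_sq (h2 : 2 * a ^ 2 = 0) (h3 : a ^ 3 = 0) :
    Function.Bijective (fun x : R => x + a * x ^ 2) :=
  ⟨(leftInverse_sub_mul_sq_add_mul_sq h2 h3).injective,
    (rightInverse_sub_mul_sq_add_mul_sq h2 h3).surjective⟩

end QuadraticPermutation

theorem qpp_exists_multiple_of_eight_general (m : ℕ) :
    Function.Bijective (fun x : ZMod (8 * m) => x + (2 * m : ℕ) * x ^ 2) := by
  apply bijective_add_mul_sq
  · exact_mod_cast (ZMod.natCast_eq_zero_iff _ _).2 ⟨m, by ring⟩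
  · exact_mod_cast (ZMod.natCast_eq_zero_iff _ _).2 ⟨m ^ 2, by ring⟩

/-- For N = 8m, f(x) = x + 2m·x² is a permutation of ℤ_N. -/
theorem qpp_exists_multiple_of_eight (m : ℕ) (hm : 0 < m) :
    Function.Bijective (fun x : ZMod (8 * m) => x + (2 * m : ℕ) * x ^ 2) :=
  qpp_exists_multiple_of_eight_general m
end

section
/- For every integer k ≥ 1, the functions f(x) = (2^k−1)x + 2^{k+1}x² and g(x) = (−2^k−1)x + 2^{k+1}x², both taken mod N = 2^{2k−1}, are mutually inverse: f(g(x)) ≡ x (mod N) and g(f(x)) ≡ x (mod N) for all x ∈ ℤ_N. -/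
/-! With `a = 2 ^ k` we have `2 ^ (k + 1) = 2 * a` and `a ^ 2 = 2 ^ (2 * k) ≡ 0 (mod 2 ^ (2 * k - 1))`.
Both compositions of `x ↦ (± a - 1) * x + 2 * a * x ^ 2` expand to `x` plus multiples of `a ^ 2`. -/

section SquareZero

variable {R : Type*} [CommRing R] {a : R}

theorem leftInverse_quadratic_of_sq_eq_zero (ha : a ^ 2 = 0) :
    Function.LeftInverse (fun x => (a - 1) * x + 2 * a * x ^ 2)
      (fun x => (-a - 1) * x + 2 * a * x ^ 2) := fun x => by
  linear_combination (-x + (6 + 2 * a) * x ^ 2 - 8 * (a + 1) * x ^ 3 + 8 * a * x ^ 4) * ha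

theorem rightInverse_quadratic_of_sq_eq_zero (ha : a ^ 2 = 0) :
    Function.RightInverse (fun x => (a - 1) * x + 2 * a * x ^ 2)
      (fun x => (-a - 1) * x + 2 * a * x ^ 2) := fun x => by
  linear_combination (-x + (2 * a - 6) * x ^ 2 + 8 * (a - 1) * x ^ 3 + 8 * a * x ^ 4) * ha

end SquareZero

theorem ZMod.two_pow_sq_eq_zero (k : ℕ) : ((2 : ZMod (2 ^ (2 * k - 1))) ^ k) ^ 2 = 0 := by
  rw [← pow_mul, mul_comm]
  exact_mod_cast (ZMod.natCast_eq_zero_iff _ _).mpr (pow_dvd_pow 2 (Nat.sub_le _ _))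

theorem max_spread_qpp_inverse_general (k : ℕ) :
    let N := 2 ^ (2 * k - 1)
    let f : ZMod N → ZMod N := fun x => ((2 : ZMod N) ^ k - 1) * x + 2 ^ (k + 1) * x ^ 2
    let g : ZMod N → ZMod N := fun x => (-(2 : ZMod N) ^ k - 1) * x + 2 ^ (k + 1) * x ^ 2
    ∀ x : ZMod N, f (g x) = x ∧ g (f x) = x := by
  intro N f g x
  have hsq := ZMod.two_pow_sq_eq_zero k
  have hcoeff : (2 : ZMod N) ^ (k + 1) = 2 * 2 ^ k := pow_succ' 2 k
  simp only [f, g, hcoeff]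
  exact ⟨leftInverse_quadratic_of_sq_eq_zero hsq x, rightInverse_quadratic_of_sq_eq_zero hsq x⟩

/-- For k ≥ 1 and N = 2^{2k−1}, f(x) = (2^k−1)x + 2^{k+1}x² and
g(x) = (−2^k−1)x + 2^{k+1}x² are mutually inverse functions on ℤ_N. -/
theorem max_spread_qpp_inverse (k : ℕ) (hk : 1 ≤ k) :
    let N := 2 ^ (2 * k - 1)
    let f : ZMod N → ZMod N := fun x => ((2 : ZMod N) ^ k - 1) * x + 2 ^ (k + 1) * x ^ 2
    let g : ZMod N → ZMod N := fun x => (-(2 : ZMod N) ^ k - 1) * x + 2 ^ (k + 1) * x ^ 2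
    ∀ x : ZMod N, f (g x) = x ∧ g (f x) = x :=
  max_spread_qpp_inverse_general k
end

section
/- Let Q = {(x, q(x)) : x ∈ ℤ_N} be the graph of a quadratic permutation polynomial q(x) = q₁x + q₂x² mod N, and let H be the group of translations of ℤ_N² that map Q onto itself. Then H has order gcd(2q₂, N), and the number of orbits of H acting on Q is N / gcd(2q₂, N). -/
/-!
A translation `(k₁, k₂)` maps the graph of `f x = a x + b x²` onto itself exactly when
`2 b k₁ = 0` and `(k₁, k₂)` itself lies on the graph, because
`f (x + k₁) = f x + f k₁ + 2 b x k₁`. So `H` is the graph of `f` over the kernel `K` of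
`x ↦ 2 b x`, on which `f` is additive, and the `H`-orbit of `(x, f x)` is the graph over the
coset `x + K`. In `ℤ_N` the kernel of multiplication by `2 q₂` has `gcd(2 q₂, N)` elements and
`N / gcd(2 q₂, N)` cosets.
-/

namespace QuadraticGraph

variable {R : Type*} [CommRing R]

def graph (a b : R) : Set (R × R) := {p | p.2 = a * p.1 + b * p.1 ^ 2}

def point (a b x : R) : R × R := (x, a * x + b * x ^ 2)

def shifts (b : R) : AddSubgroup R := (AddMonoidHom.mulLeft (2 * b)).ker

variable {a b : R}

theorem mem_shifts {k : R} : k ∈ shifts b ↔ 2 * b * k = 0 := Iff.rfl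

theorem point_injective : Function.Injective (point a b) :=
  fun _ _ h => congrArg Prod.fst h

theorem point_mem_graph (x : R) : point a b x ∈ graph a b := rfl

theorem graph_eq_range_point (a b : R) : graph a b = Set.range (point a b) :=
  Set.ext fun p => ⟨fun hp => ⟨p.1, Prod.ext rfl hp.symm⟩, by rintro ⟨x, rfl⟩; rfl⟩

theorem point_add_of_mem_shifts (x : R) {k : R} (hk : k ∈ shifts b) :
    point a b (x + k) = point a b x + point a b k := by
  refine Prod.ext rfl ?_
  simp only [point, Prod.snd_add]
  linear_combination x * mem_shifts.mp hk

theorem image_add_graph_eq_iff (k : R × R) :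
    (fun p => p + k) '' graph a b = graph a b ↔ k ∈ point a b '' shifts b := by
  constructor
  · intro hk
    have hpoint : ∀ x, a * x + b * x ^ 2 + k.2 = a * (x + k.1) + b * (x + k.1) ^ 2 :=
      fun x => (hk.subset (Set.mem_image_of_mem _ (point_mem_graph x)) :)
    refine ⟨k.1, mem_shifts.mpr ?_, Prod.ext rfl ?_⟩
    · linear_combination hpoint 0 - hpoint 1
    · show a * k.1 + b * k.1 ^ 2 = k.2
      linear_combination -hpoint 0
  · rintro ⟨y, hy, rfl⟩
    rw [graph_eq_range_point, ← Set.range_comp]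
    simp_rw [Function.comp_def, ← point_add_of_mem_shifts _ hy]
    exact (Equiv.addRight y).surjective.range_comp (point a b)

theorem setOf_add_mem_image_point (x : R) :
    {p | ∃ h ∈ point a b '' shifts b, p = point a b x + h} =
      point a b '' (QuotientAddGroup.mk ⁻¹' {(x : R ⧸ shifts b)}) := by
  ext p
  constructor
  · rintro ⟨_, ⟨k, hk, rfl⟩, rfl⟩
    refine ⟨x + k, ?_, point_add_of_mem_shifts x hk⟩
    simpa [QuotientAddGroup.eq] using hk
  · rintro ⟨y, hy, rfl⟩
    have hxy : -x + y ∈ shifts b := QuotientAddGroup.eq.mp (Set.mem_singleton_iff.mp hy).symm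
    refine ⟨_, ⟨-x + y, hxy, rfl⟩, ?_⟩
    rw [← point_add_of_mem_shifts x hxy, add_neg_cancel_left]

theorem ncard_orbits_eq_index :
    Set.ncard {O | ∃ p ∈ graph a b, O = {p' | ∃ h ∈ point a b '' shifts b, p' = p + h}} =
      (shifts b).index := by
  let orbit : R ⧸ shifts b → Set (R × R) := fun q => point a b '' (QuotientAddGroup.mk ⁻¹' {q})
  have horbit_injective : Function.Injective orbit :=
    (Set.image_injective.mpr point_injective).comp
      (QuotientAddGroup.mk_surjective.preimage_injective.comp Set.singleton_injective)
  have horbits : {O | ∃ p ∈ graph a b, O = {p' | ∃ h ∈ point a b '' shifts b, p' = p + h}} =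
      Set.range orbit := by
    ext O
    constructor
    · rintro ⟨p, hp, rfl⟩
      obtain ⟨x, rfl⟩ : p ∈ Set.range (point a b) := graph_eq_range_point a b ▸ hp
      exact ⟨x, (setOf_add_mem_image_point x).symm⟩
    · rintro ⟨q, rfl⟩
      obtain ⟨x, rfl⟩ := QuotientAddGroup.mk_surjective q
      exact ⟨point a b x, point_mem_graph x, (setOf_add_mem_image_point x).symm⟩
  rw [horbits, Set.ncard_range_of_injective horbit_injective, AddSubgroup.index]

end QuadraticGraph

open QuadraticGraph in
theorem qpp_nonlinearity_degree_general (N : ℕ) (hN : 0 < N) (q₁ q₂ : ℕ) :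
    let Q : Set (ZMod N × ZMod N) :=
      {p | p.2 = (q₁ : ZMod N) * p.1 + (q₂ : ZMod N) * p.1 ^ 2}
    let H : Set (ZMod N × ZMod N) :=
      {k | (fun p : ZMod N × ZMod N => p + k) '' Q = Q}
    Set.ncard H = Nat.gcd (2 * q₂) N ∧
    Set.ncard {O : Set (ZMod N × ZMod N) | ∃ p ∈ Q, O = {p' | ∃ k ∈ H, p' = p + k}} =
      N / Nat.gcd (2 * q₂) N := by
  intro Q H
  have : NeZero N := ⟨hN.ne'⟩
  have hH : H = point (q₁ : ZMod N) q₂ '' shifts (q₂ : ZMod N) :=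
    Set.ext image_add_graph_eq_iff
  have hK : shifts (q₂ : ZMod N) = (nsmulAddMonoidHom (2 * q₂)).ker := by
    ext x
    simp [mem_shifts, nsmul_eq_mul]
  have hQ : Q = graph (q₁ : ZMod N) q₂ := rfl
  rw [hH, hQ, Set.ncard_image_of_injective _ point_injective, ncard_orbits_eq_index,
    ← Nat.card_coe_set_eq, SetLike.coe_sort_coe, hK,
    IsAddCyclic.card_nsmulAddMonoidHom_ker, IsAddCyclic.index_nsmulAddMonoidHom_ker,
    Nat.card_zmod, Nat.gcd_comm]
  exact ⟨rfl, rfl⟩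

/-- For a QPP q(x) = q₁x + q₂x² over ℤ_N, the group H of translations
of ℤ_N² preserving the graph Q has order gcd(2q₂,N), and the number of H-orbits on Q
is N / gcd(2q₂,N). -/
theorem qpp_nonlinearity_degree (N : ℕ) (hN : 0 < N) (q₁ q₂ : ℕ)
    (hperm : Function.Bijective
      (fun x : ZMod N => (q₁ : ZMod N) * x + (q₂ : ZMod N) * x ^ 2)) :
    let Q : Set (ZMod N × ZMod N) :=
      {p | p.2 = (q₁ : ZMod N) * p.1 + (q₂ : ZMod N) * p.1 ^ 2}
    let H : Set (ZMod N × ZMod N) :=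
      {k | (fun p : ZMod N × ZMod N => p + k) '' Q = Q}
    Set.ncard H = Nat.gcd (2 * q₂) N ∧
    Set.ncard {O : Set (ZMod N × ZMod N) | ∃ p ∈ Q, O = {p' | ∃ k ∈ H, p' = p + k}} =
      N / Nat.gcd (2 * q₂) N :=
  qpp_nonlinearity_degree_general N hN q₁ q₂
end

section
/- Let q(x) = q₁x + q₂x² mod N be a quadratic permutation polynomial with gcd of relevance g = gcd(2q₂,N), and let O = {(k₀(i), k₁(i)) : i = 0,…,g−1} with k₀(i) = iN/g and k₁(i) = q₁k₀(i) − q₂k₀(i)², be the orbit of (0,0). Then any two distinct points p, p' ∈ O satisfy δ_N(p,p') ≥ 2N/g, where δ_N is the two-dimensional Lee metric. -/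
/-- Lee distance on ℤ_N: |a−b|_N = min((a−b) mod N, (b−a) mod N). -/
def leeDist {N : ℕ} (a b : ZMod N) : ℕ := min (a - b).val (b - a).val

/-- Two-dimensional Lee metric on ℤ_N². -/
def leeDist2 {N : ℕ} (p p' : ZMod N × ZMod N) : ℕ :=
  leeDist p.1 p'.1 + leeDist p.2 p'.2

/-!
Put `d = N / g`. Since `g ∣ 2 q₂` and `g d = N`, `2 q₂ k₀ i = 0`, so `k₁ i = q (k₀ i)`.
Both coordinate differences of two orbit points are multiples of `d`, as `k₀ i = d i` and
`k₁ i - k₁ j = (k₀ i - k₀ j)(q₁ - q₂ (k₀ i + k₀ j))`. Distinct orbit points differ in `k₀`,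
hence, `q` being injective, also in `k₁`; and a nonzero multiple of a divisor `d` of `N` has
Lee norm at least `d`.
-/

theorem ZMod.dvd_val_of_natCast_dvd {N d : ℕ} [NeZero N] (hd : d ∣ N) {x : ZMod N}
    (h : (d : ZMod N) ∣ x) : d ∣ x.val := by
  obtain ⟨y, rfl⟩ := h
  rw [← ZMod.natCast_eq_zero_iff, ← ZMod.cast_eq_val, ← ZMod.castHom_apply (h := hd),
    map_mul, map_natCast, ZMod.natCast_self, zero_mul]

theorem le_leeDist_of_natCast_dvd_sub {N d : ℕ} [NeZero N] (hd : d ∣ N) {a b : ZMod N}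
    (hab : a ≠ b) (h : (d : ZMod N) ∣ a - b) : d ≤ leeDist a b := by
  have key : ∀ x : ZMod N, x ≠ 0 → (d : ZMod N) ∣ x → d ≤ x.val := fun x hx hdx =>
    Nat.le_of_dvd (ZMod.val_pos.mpr hx) (ZMod.dvd_val_of_natCast_dvd hd hdx)
  exact le_min (key _ (sub_ne_zero.mpr hab) h)
    (key _ (sub_ne_zero.mpr hab.symm) (by rwa [← neg_sub, dvd_neg]))

theorem ZMod.natCast_mul_natCast_div_eq_zero {N g a : ℕ} (hga : g ∣ a) (hgN : g ∣ N) :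
    (a : ZMod N) * ((N / g : ℕ) : ZMod N) = 0 := by
  obtain ⟨c, rfl⟩ := hga
  rw [← Nat.cast_mul, ZMod.natCast_eq_zero_iff, mul_right_comm, Nat.mul_div_cancel' hgN]
  exact dvd_mul_right _ _

theorem orbit_separation_general (N : ℕ) (q₁ q₂ : ℕ)
    (hperm : Function.Bijective
      (fun x : ZMod N => (q₁ : ZMod N) * x + (q₂ : ZMod N) * x ^ 2)) :
    let g : ℕ := Nat.gcd (2 * q₂) N
    let k₀ : ℕ → ZMod N := fun i => ((i * (N / g) : ℕ) : ZMod N)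
    let k₁ : ℕ → ZMod N := fun i => (q₁ : ZMod N) * k₀ i - (q₂ : ZMod N) * (k₀ i) ^ 2
    let O : Set (ZMod N × ZMod N) := {p | ∃ i < g, p = (k₀ i, k₁ i)}
    ∀ p ∈ O, ∀ p' ∈ O, p ≠ p' → 2 * (N / g) ≤ leeDist2 p p' := by
  intro g k₀ k₁ O p ⟨i, _, hp⟩ p' ⟨j, _, hp'⟩ hne
  subst hp hp'
  rcases N.eq_zero_or_pos with rfl | hN
  · simp
  have : NeZero N := ⟨hN.ne'⟩
  have hdN : N / g ∣ N := Nat.div_dvd_of_dvd (Nat.gcd_dvd_right _ _)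
  have hk₀ : ∀ m, k₀ m = m * ((N / g : ℕ) : ZMod N) := fun m => by simp only [k₀, Nat.cast_mul]
  have hk₁ : ∀ m, k₁ m = q₁ * k₀ m + q₂ * k₀ m ^ 2 := fun m => by
    have h2q₂ : (2 * q₂ : ZMod N) * ((N / g : ℕ) : ZMod N) = 0 := by
      exact_mod_cast ZMod.natCast_mul_natCast_div_eq_zero (Nat.gcd_dvd_left _ _ : g ∣ 2 * q₂)
        (Nat.gcd_dvd_right _ _)
    linear_combination (-(m : ZMod N) * k₀ m) * h2q₂ - 2 * q₂ * k₀ m * hk₀ m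
  have h₀ : k₀ i ≠ k₀ j := fun h => hne (by simp only [k₁, h])
  have h₁ : k₁ i ≠ k₁ j := by rw [hk₁, hk₁]; exact hperm.injective.ne h₀
  have hd₀ : ((N / g : ℕ) : ZMod N) ∣ k₀ i - k₀ j := by
    rw [hk₀, hk₀]; exact dvd_sub (dvd_mul_left _ _) (dvd_mul_left _ _)
  have hd₁ : ((N / g : ℕ) : ZMod N) ∣ k₁ i - k₁ j :=
    (hd₀.mul_right (q₁ - q₂ * (k₀ i + k₀ j))).trans (dvd_of_eq (by simp only [k₁]; ring))
  calc 2 * (N / g) = N / g + N / g := two_mul _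
    _ ≤ leeDist2 (k₀ i, k₁ i) (k₀ j, k₁ j) :=
      add_le_add (le_leeDist_of_natCast_dvd_sub hdN h₀ hd₀)
        (le_leeDist_of_natCast_dvd_sub hdN h₁ hd₁)

/-- For a QPP q(x) = q₁x + q₂x² with g = gcd(2q₂,N), any two distinct
points of the orbit O of (0,0) are at Lee distance at least 2N/g. -/
theorem orbit_separation (N : ℕ) (hN : 0 < N) (q₁ q₂ : ℕ)
    (hperm : Function.Bijective
      (fun x : ZMod N => (q₁ : ZMod N) * x + (q₂ : ZMod N) * x ^ 2)) :
    let g : ℕ := Nat.gcd (2 * q₂) N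
    let k₀ : ℕ → ZMod N := fun i => ((i * (N / g) : ℕ) : ZMod N)
    let k₁ : ℕ → ZMod N := fun i => (q₁ : ZMod N) * k₀ i - (q₂ : ZMod N) * (k₀ i) ^ 2
    let O : Set (ZMod N × ZMod N) := {p | ∃ i < g, p = (k₀ i, k₁ i)}
    ∀ p ∈ O, ∀ p' ∈ O, p ≠ p' → 2 * (N / g) ≤ leeDist2 p p' :=
  orbit_separation_general N q₁ q₂ hperm
end

section
/- The permutation t of ℤ_4 defined by t(0)=1, t(1)=3, t(2)=0, t(3)=2 has L₁ spread factor D_E(t) = 3, which strictly exceeds √(2·4) = 2√2. -/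
/-- The permutation t of ℤ_4 with t(0)=1, t(1)=3, t(2)=0, t(3)=2 has
L₁ spread factor D_E(t) = 3, and 3 > √(2·4). -/
theorem spread_exceeding_bound (t : ZMod 4 → ZMod 4)
    (h0 : t 0 = 1) (h1 : t 1 = 3) (h2 : t 2 = 0) (h3 : t 3 = 2) :
    sInf {d | ∃ x₁ x₂ : ZMod 4, x₁ ≠ x₂ ∧
        d = Nat.dist x₁.val x₂.val + Nat.dist (t x₁).val (t x₂).val} = 3 ∧
    Real.sqrt (2 * 4) < 3 := by
  constructor
  · apply le_antisymm
    · apply Nat.sInf_le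
      refine ⟨0, 2, by decide, ?_⟩
      rw [h0, h2]
      decide
    · refine le_csInf ⟨3, 0, 2, by decide, by rw [h0, h2]; decide⟩ ?_
      rintro d ⟨x₁, x₂, hne, rfl⟩
      have ht : ∀ x, t x = ![1, 3, 0, 2] x := by
        intro x; fin_cases x <;> assumption
      rw [ht, ht]; revert x₁ x₂; decide
  · rw [show ((2:ℝ) * 4) = 8 by norm_num]
    rw [show (3:ℝ) = Real.sqrt 9 by rw [show (9:ℝ) = 3^2 by norm_num, Real.sqrt_sq]; norm_num]
    exact Real.sqrt_lt_sqrt (by norm_num) (by norm_num)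
end

section
/- For every permutation f of ℤ_N (N ≥ 2), the Lee spread factor D(f) satisfies D(f) ≤ √(2N). -/
lemma leeDist_le_natAbs {N : ℕ} [NeZero N] (a b : ZMod N) (k : ℤ)
    (h : a - b = (k : ZMod N)) : leeDist a b ≤ k.natAbs := by
  rcases Int.natAbs_eq k with hk | hk
  · have h1 : a - b = ((k.natAbs : ℕ) : ZMod N) := by
      rw [h]; conv_lhs => rw [hk]
      rw [Int.cast_natCast]
    calc leeDist a b ≤ (a - b).val := min_le_left _ _
      _ = ((k.natAbs : ℕ) : ZMod N).val := by rw [h1]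
      _ = k.natAbs % N := ZMod.val_natCast _ _
      _ ≤ k.natAbs := Nat.mod_le _ _
  · have h1 : b - a = ((k.natAbs : ℕ) : ZMod N) := by
      have h2 : b - a = ((-k : ℤ) : ZMod N) := by rw [← neg_sub, h]; push_cast; ring
      have h3 : (-k : ℤ) = (k.natAbs : ℤ) := by omega
      rw [h2, h3, Int.cast_natCast]
    calc leeDist a b ≤ (b - a).val := min_le_right _ _
      _ = ((k.natAbs : ℕ) : ZMod N).val := by rw [h1]
      _ = k.natAbs % N := ZMod.val_natCast _ _
      _ ≤ k.natAbs := Nat.mod_le _ _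

lemma intCast_inj_of_abs_lt {N : ℕ} (p q : ℤ) (h : ((p : ZMod N) = (q : ZMod N)))
    (hlt : (p - q).natAbs < N) : p = q := by
  have h0 : ((p - q : ℤ) : ZMod N) = 0 := by push_cast; rw [h]; ring
  have hdvd : (N : ℤ) ∣ (p - q) := (ZMod.intCast_zmod_eq_zero_iff_dvd _ N).mp h0
  have : N ∣ (p - q).natAbs := Int.natAbs_dvd_natAbs.mpr (by simpa using hdvd)
  rcases Nat.eq_zero_or_pos (p - q).natAbs with h' | h'
  · omega
  · have := Nat.le_of_dvd h' this; omega

/-- For every permutation f of ℤ_N (N ≥ 2), the Lee spread factor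
D(f) is at most √(2N). -/
theorem spread_upper_bound (N : ℕ) (hN : 2 ≤ N) (f : ZMod N → ZMod N)
    (hf : Function.Bijective f) :
    ((sInf {d | ∃ x₁ x₂ : ZMod N, x₁ ≠ x₂ ∧
        d = leeDist x₁ x₂ + leeDist (f x₁) (f x₂)} : ℕ) : ℝ) ≤
      Real.sqrt (2 * N) := by
  haveI : NeZero N := ⟨by omega⟩
  haveI : Fact (1 < N) := ⟨by omega⟩
  set D := sInf {d | ∃ x₁ x₂ : ZMod N, x₁ ≠ x₂ ∧
      d = leeDist x₁ x₂ + leeDist (f x₁) (f x₂)} with hDdef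
  have hmem : ∀ x₁ x₂ : ZMod N, x₁ ≠ x₂ →
      D ≤ leeDist x₁ x₂ + leeDist (f x₁) (f x₂) :=
    fun x₁ x₂ h => Nat.sInf_le ⟨x₁, x₂, h, rfl⟩
  -- leeDist is at most N/2
  have hlee : ∀ x y : ZMod N, leeDist x y ≤ N / 2 := by
    intro x y
    rcases eq_or_ne x y with h | h
    · simp [leeDist, h]
    · have h1 : y - x = -(x - y) := by ring
      have h2 : x - y ≠ 0 := sub_ne_zero.mpr h
      have h3 : (y - x).val = N - (x - y).val := by
        rw [h1, ZMod.neg_val, if_neg h2]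
      have h4 : (x - y).val < N := ZMod.val_lt _
      unfold leeDist; omega
  have hDN : D ≤ N := by
    have h01 : (0 : ZMod N) ≠ 1 := zero_ne_one
    have h1 := hmem 0 1 h01
    have h2 := hlee 0 1
    have h3 := hlee (f 0) (f 1)
    omega
  -- key cancellation lemma
  have key : ∀ (x₁ x₂ : ZMod N) (p₁ q₁ p₂ q₂ : ℤ),
      (p₁ - p₂).natAbs + (q₁ - q₂).natAbs < D →
      x₁ + (p₁ : ZMod N) = x₂ + (p₂ : ZMod N) →
      f x₁ + (q₁ : ZMod N) = f x₂ + (q₂ : ZMod N) →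
      x₁ = x₂ ∧ p₁ = p₂ ∧ q₁ = q₂ := by
    intro x₁ x₂ p₁ q₁ p₂ q₂ hsum hp hq
    rcases eq_or_ne x₁ x₂ with hx | hx
    · subst hx
      have hp' : (p₁ : ZMod N) = (p₂ : ZMod N) := by
        have := hp; exact add_left_cancel this
      have hq' : (q₁ : ZMod N) = (q₂ : ZMod N) := add_left_cancel hq
      have hpe : p₁ = p₂ := intCast_inj_of_abs_lt p₁ p₂ hp' (by omega)
      have hqe : q₁ = q₂ := intCast_inj_of_abs_lt q₁ q₂ hq' (by omega)
      exact ⟨rfl, hpe, hqe⟩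
    · exfalso
      have h1 : x₁ - x₂ = ((p₂ - p₁ : ℤ) : ZMod N) := by
        push_cast
        have : x₁ + (p₁ : ZMod N) = x₂ + (p₂ : ZMod N) := hp
        linear_combination this
      have h2 : f x₁ - f x₂ = ((q₂ - q₁ : ℤ) : ZMod N) := by
        push_cast; linear_combination hq
      have l1 := leeDist_le_natAbs x₁ x₂ _ h1
      have l2 := leeDist_le_natAbs (f x₁) (f x₂) _ h2
      have := hmem x₁ x₂ hx
      omega
  set a := (D + 1) / 2 with ha
  set b := D / 2 with hb
  have habD : a + b = D := by omega
  have hba : b ≤ a ∧ a ≤ b + 1 := by omega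
  -- the injection
  set F : (ZMod N × Fin a × Fin a) ⊕ (ZMod N × Fin b × Fin b) → ZMod N × ZMod N :=
    fun s => match s with
    | Sum.inl (x, i, j) =>
        (x + ((((i : ℕ) : ℤ) + ((j : ℕ) : ℤ) : ℤ) : ZMod N),
         f x + ((((i : ℕ) : ℤ) - ((j : ℕ) : ℤ) : ℤ) : ZMod N))
    | Sum.inr (x, i, j) =>
        (x + ((((i : ℕ) : ℤ) + ((j : ℕ) : ℤ) + 1 : ℤ) : ZMod N),
         f x + ((((i : ℕ) : ℤ) - ((j : ℕ) : ℤ) : ℤ) : ZMod N)) with hF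
  have hFinj : Function.Injective F := by
    rintro (⟨x₁, i₁, j₁⟩ | ⟨x₁, i₁, j₁⟩) (⟨x₂, i₂, j₂⟩ | ⟨x₂, i₂, j₂⟩) h <;>
      simp only [hF, Prod.mk.injEq] at h <;>
      obtain ⟨h1, h2⟩ := h
    · have hi₁ := i₁.isLt; have hj₁ := j₁.isLt
      have hi₂ := i₂.isLt; have hj₂ := j₂.isLt
      obtain ⟨hx, hp, hq⟩ := key x₁ x₂ _ _ _ _ (by omega) h1 h2
      have : (i₁ : ℕ) = i₂ ∧ (j₁ : ℕ) = j₂ := by omega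
      simp [hx, Fin.ext_iff, this.1, this.2]
    · have hi₁ := i₁.isLt; have hj₁ := j₁.isLt
      have hi₂ := i₂.isLt; have hj₂ := j₂.isLt
      obtain ⟨hx, hp, hq⟩ := key x₁ x₂ _ _ _ _ (by omega) h1 h2
      exact absurd hp (by omega)
    · have hi₁ := i₁.isLt; have hj₁ := j₁.isLt
      have hi₂ := i₂.isLt; have hj₂ := j₂.isLt
      obtain ⟨hx, hp, hq⟩ := key x₁ x₂ _ _ _ _ (by omega) h1 h2
      exact absurd hp (by omega)
    · have hi₁ := i₁.isLt; have hj₁ := j₁.isLt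
      have hi₂ := i₂.isLt; have hj₂ := j₂.isLt
      obtain ⟨hx, hp, hq⟩ := key x₁ x₂ _ _ _ _ (by omega) h1 h2
      have : (i₁ : ℕ) = i₂ ∧ (j₁ : ℕ) = j₂ := by omega
      simp [hx, Fin.ext_iff, this.1, this.2]
  have hcard := Fintype.card_le_of_injective F hFinj
  simp only [Fintype.card_sum, Fintype.card_prod, ZMod.card, Fintype.card_fin] at hcard
  have hsum : a * a + b * b ≤ N := by
    have h0 : 0 < N := by omega
    have : N * (a * a + b * b) ≤ N * N := by ring_nf; ring_nf at hcard; linarith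
    exact Nat.le_of_mul_le_mul_left this h0
  have hD2 : (D : ℝ) ^ 2 ≤ 2 * N := by
    have h1 : ((a : ℝ) + b) ^ 2 ≤ 2 * ((a : ℝ) * a + (b : ℝ) * b) := by
      nlinarith [sq_nonneg ((a : ℝ) - b)]
    have h2 : (a : ℝ) * a + (b : ℝ) * b ≤ N := by exact_mod_cast hsum
    have h3 : (D : ℝ) = (a : ℝ) + b := by
      have : (a : ℝ) + b = ((a + b : ℕ) : ℝ) := by push_cast; ring
      rw [this, habD]
    rw [h3]; linarith
  calc ((D : ℕ) : ℝ) = Real.sqrt ((D : ℝ) ^ 2) := (Real.sqrt_sq (by positivity)).symm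
    _ ≤ Real.sqrt (2 * N) := Real.sqrt_le_sqrt hD2
end

section
/- Let n = 2^{k−1} and N = 2n², and let f(x) = (2n−1)x + 8nx² mod N. For each i with 0 ≤ i < n, the set of solutions x ∈ ℤ_N of f(x) ≡ −x + 2ni (mod N) has exactly 2n elements. -/
lemma inj_aux (m : ℕ) : Function.Injective (fun x : ZMod (2^m) => x + 4 * x^2) := by
  intro a b h
  simp only at h
  have hnil : IsNilpotent (4 * (a + b) : ZMod (2^m)) := by
    refine ⟨m, ?_⟩
    have h2 : (2 : ZMod (2^m))^m = 0 := by
      have : ((2^m : ℕ) : ZMod (2^m)) = 0 := ZMod.natCast_self _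
      push_cast at this
      exact this
    have : (4 * (a+b) : ZMod (2^m))^m = (2:ZMod (2^m))^m * ((2*(a+b))^m) := by
      rw [← mul_pow]; ring_nf
    rw [this, h2, zero_mul]
  have hu : IsUnit (1 + 4 * (a + b) : ZMod (2^m)) := hnil.isUnit_one_add
  have key : (1 + 4 * (a + b)) * (a - b) = 0 := by ring_nf; linear_combination h
  have := hu.mul_right_eq_zero.mp key
  exact sub_eq_zero.mp this

/-- With n = 2^{k−1}, N = 2n², f(x) = (2n−1)x + 8nx², for each
i < n the congruence f(x) ≡ −x + 2ni (mod N) has exactly 2n solutions in ℤ_N. -/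
theorem diagonal_intersection_count (k : ℕ) (hk : 1 ≤ k) :
    let n : ℕ := 2 ^ (k - 1)
    let N : ℕ := 2 * n ^ 2
    let f : ZMod N → ZMod N := fun x =>
      ((2 * n - 1 : ℕ) : ZMod N) * x + ((8 * n : ℕ) : ZMod N) * x ^ 2
    ∀ i : ℕ, i < n →
      Set.ncard {x : ZMod N | f x = -x + ((2 * n * i : ℕ) : ZMod N)} = 2 * n := by
  intro n N f i hi
  have hn : 0 < n := Nat.pow_pos (by norm_num)
  have hN : 0 < N := by positivity
  haveI : NeZero N := ⟨hN.ne'⟩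
  haveI : NeZero n := ⟨hn.ne'⟩
  have hdvd : n ∣ N := ⟨2 * n, by ring⟩
  set π : ZMod N →+* ZMod n := ZMod.castHom hdvd (ZMod n) with hπ
  -- g mod n is bijective
  have hgbij : Function.Bijective (fun y : ZMod n => y + 4 * y^2) := by
    have := inj_aux (k - 1)
    exact Finite.injective_iff_bijective.mp this
  obtain ⟨y₀, hy₀⟩ := hgbij.surjective ((i : ZMod n))
  -- characterize membership
  have hval : ∀ a : ZMod N, ((a.val : ℕ) : ZMod N) = a := by
    intro a
    rw [ZMod.natCast_val, ZMod.cast_id]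
  have hπval : ∀ a : ZMod N, π a = ((a.val : ℕ) : ZMod n) := by
    intro a
    rw [hπ, ZMod.castHom_apply, ← ZMod.natCast_val]
  have hker : ∀ a : ZMod N, ((2*n : ℕ) : ZMod N) * a = 0 ↔ π a = 0 := by
    intro a
    rw [hπval a, ZMod.natCast_eq_zero_iff]
    conv_lhs => rw [← hval a, ← Nat.cast_mul,
      ZMod.natCast_eq_zero_iff]
    constructor
    · rintro ⟨c, hc⟩
      refine ⟨c, ?_⟩
      have h2n : 0 < 2*n := by omega
      apply Nat.eq_of_mul_eq_mul_left h2n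
      calc 2*n*a.val = N*c := hc
        _ = 2*n*(n*c) := by show 2*n^2*c = _; ring
    · rintro ⟨c, hc⟩
      exact ⟨c, by rw [hc]; ring⟩
  have hset : {x : ZMod N | f x = -x + ((2 * n * i : ℕ) : ZMod N)}
      = {x : ZMod N | π x = y₀} := by
    ext x
    simp only [Set.mem_setOf_eq, f]
    have hcast : ((2 * n - 1 : ℕ) : ZMod N) = ((2*n : ℕ) : ZMod N) - 1 := by
      rw [Nat.cast_sub (by omega)]; norm_num
    rw [hcast]
    have h8 : ((8 * n : ℕ) : ZMod N) = ((2*n : ℕ) : ZMod N) * 4 := by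
      push_cast; ring
    rw [h8]
    have h2ni : ((2 * n * i : ℕ) : ZMod N) = ((2*n : ℕ) : ZMod N) * (i : ℕ) := by
      push_cast; ring
    rw [h2ni]
    constructor
    · intro h
      have h0 : ((2*n : ℕ) : ZMod N) * ((x + 4 * x^2) - (i : ℕ)) = 0 := by
        linear_combination h
      have := (hker _).mp h0
      rw [map_sub, map_add, map_mul, map_pow] at this
      have hgi : π x + 4 * (π x)^2 = (i : ZMod n) := by
        have hπi : π ((i:ℕ) : ZMod N) = ((i:ℕ) : ZMod n) := map_natCast π i
        rw [hπi] at this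
        have h4 : π (4 : ZMod N) = 4 := map_ofNat π 4
        rw [h4] at this
        linear_combination this
      have := hgbij.injective (a₁ := π x) (a₂ := y₀) (by
        simpa [hy₀] using hgi)
      exact this
    · intro h
      have hgi : π (x + 4 * x^2 - (i : ℕ)) = 0 := by
        rw [map_sub, map_add, map_mul, map_pow, map_natCast,
          map_ofNat π 4, h]
        rw [← hy₀]
        ring
      have h0 := (hker _).mpr hgi
      linear_combination h0
  rw [hset]
  -- count the fiber
  have hyval : y₀.val < n := ZMod.val_lt y₀
  have hNval : N = n * (2 * n) := by ring
  let φ : Fin (2*n) → {x : ZMod N | π x = y₀} := fun t =>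
    ⟨((y₀.val + n * t.val : ℕ) : ZMod N), by
      simp only [Set.mem_setOf_eq]
      rw [hπ, ZMod.castHom_apply, ZMod.cast_natCast hdvd]
      push_cast
      simp [ZMod.natCast_self, ZMod.natCast_val, ZMod.cast_id]⟩
  have hφbij : Function.Bijective φ := by
    constructor
    · intro t₁ t₂ h
      have hlt : ∀ t : Fin (2*n), y₀.val + n * t.val < N := by
        intro t
        have := t.isLt
        have h1 : t.val + 1 ≤ 2*n := t.isLt
        have h2 : n * (t.val + 1) ≤ n * (2*n) := Nat.mul_le_mul_left n h1
        have h3 : n * (t.val + 1) = n * t.val + n := by ring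
        omega
      have := congrArg Subtype.val h
      simp only [φ] at this
      have hv := congrArg ZMod.val this
      rw [ZMod.val_natCast_of_lt (hlt t₁), ZMod.val_natCast_of_lt (hlt t₂)] at hv
      have : t₁.val = t₂.val := by
        have := Nat.eq_of_mul_eq_mul_left hn (by omega : n * t₁.val = n * t₂.val)
        exact this
      exact Fin.ext this
    · rintro ⟨x, hx⟩
      simp only [Set.mem_setOf_eq] at hx
      have hxv : y₀.val = x.val % n := by
        rw [← hx, hπval x, ZMod.val_natCast]
      have htlt : x.val / n < 2 * n := by
        apply Nat.div_lt_of_lt_mul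
        rw [mul_comm n (2*n)] at hNval ⊢
        rw [← hNval]
        exact ZMod.val_lt x
      refine ⟨⟨x.val / n, htlt⟩, ?_⟩
      apply Subtype.ext
      simp only [φ]
      rw [hxv, Nat.mod_add_div]
      exact hval x
  have : Nat.card {x : ZMod N | π x = y₀} = 2 * n := by
    rw [Nat.card_eq_of_bijective φ hφbij |>.symm]
    simp
  rw [← Nat.card_coe_set_eq, this]
end
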